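/- Let 𝒜 be an epireflective class of topological spaces. Let X, Y, Z ∈ 𝒜, let b ∈ Y be a non-isolated point such that {b} is closed in Y, and assume that the property P(b,Y,Z) holds. Then the space X△_bY belongs to 𝒜. -/

import Mathlib

open Topology

universe u v w

/-- A class of topological spaces (underlying types in a fixed universe). -/
def SpaceClass : Type (u + 1) :=
  ∀ (X : Type u), TopologicalSpace X → Prop

/-- Closedness under homeomorphic copies. -/
def ClosedUnderHomeo (ℬ : SpaceClass.{u}) : Prop :=
  ∀ (X Y : Type u) (tX : TopologicalSpace X) (tY : TopologicalSpace Y),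
    Nonempty (@Homeomorph X Y tX tY) → ℬ X tX → ℬ Y tY

/-- An epireflective class: closed under homeomorphic copies, subspaces and
set-indexed topological products. -/
structure IsEpireflectiveClass (𝒜 : SpaceClass.{u}) : Prop where
  homeo : ClosedUnderHomeo 𝒜
  subspace : ∀ (X : Type u) (tX : TopologicalSpace X) (s : Set X),
    𝒜 X tX → 𝒜 s (TopologicalSpace.induced (Subtype.val : s → X) tX)
  prod : ∀ (ι : Type u) (Y : ι → Type u) (t : ∀ i, TopologicalSpace (Y i)),
    (∀ i, 𝒜 (Y i) (t i)) → 𝒜 (∀ i, Y i) (@Pi.topologicalSpace ι Y t)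

/-- The disjoint-union (topological sum) topology on a sigma type. -/
def sigmaTop {ι : Type v} (Y : ι → Type w) (t : ∀ i, TopologicalSpace (Y i)) :
    TopologicalSpace (Σ i, Y i) :=
  ⨆ i, TopologicalSpace.coinduced (Sigma.mk i) (t i)

/-- An AD-class in `𝒜`: a subclass of `𝒜` closed under homeomorphic copies, closed
under topological sums of arbitrary families of its members, and divisible in `𝒜`
(quotients in `𝒜` of members of `ℬ` belong to `ℬ`). -/
structure IsADClass (𝒜 ℬ : SpaceClass.{u}) : Prop where
  subset : ∀ (X : Type u) (tX : TopologicalSpace X), ℬ X tX → 𝒜 X tX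
  homeo : ClosedUnderHomeo ℬ
  sums : ∀ (ι : Type u) (Y : ι → Type u) (t : ∀ i, TopologicalSpace (Y i)),
    (∀ i, ℬ (Y i) (t i)) → ℬ (Σ i, Y i) (sigmaTop Y t)
  divisible : ∀ (X Z : Type u) (tX : TopologicalSpace X) (tZ : TopologicalSpace Z)
    (q : X → Z), ℬ X tX → 𝒜 Z tZ → @IsQuotientMap X Z tX tZ q → ℬ Z tZ

/-- A class is hereditary if every nonempty subspace of each member belongs to it. -/
def IsHereditary (ℬ : SpaceClass.{u}) : Prop :=
  ∀ (X : Type u) (tX : TopologicalSpace X) (s : Set X), s.Nonempty → ℬ X tX →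
    ℬ s (TopologicalSpace.induced (Subtype.val : s → X) tX)

/-- The prime factor `X_a`: the topology on the underlying set of `X` whose open sets
are exactly the sets `U` such that `a ∈ U` implies `U` is a neighbourhood of `a`. -/
def primeFactor {X : Type u} (t : TopologicalSpace X) (a : X) : TopologicalSpace X where
  IsOpen U := a ∈ U → U ∈ @nhds X t a
  isOpen_univ := fun _ => Filter.univ_mem
  isOpen_inter := fun U V hU hV h => Filter.inter_mem (hU h.1) (hV h.2)
  isOpen_sUnion := fun S hS h => by
    obtain ⟨U, hU, haU⟩ := h
    exact Filter.mem_of_superset (hS U hU haU) (Set.subset_sUnion_of_mem hU)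

/-- A prime space: a topological space with exactly one non-isolated point. -/
def IsPrimeSpace (X : Type u) (t : TopologicalSpace X) : Prop :=
  ∃! a : X, ¬ @IsOpen X t {a}

/-- The space `X △_b Y`: the final topology on `X × Y` with respect to the maps
`f : x ↦ (x, b)` and `g_a : y ↦ (a, y)`, one for each `a ∈ X`. -/
def triangleTop {X Y : Type u} (tX : TopologicalSpace X) (tY : TopologicalSpace Y)
    (b : Y) : TopologicalSpace (X × Y) :=
  TopologicalSpace.coinduced (fun x : X => (x, b)) tX ⊔
    ⨆ a : X, TopologicalSpace.coinduced (fun y : Y => (a, y)) tY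

/-- The property `P(b, Y, Z)`: there are a family `B` of open neighbourhoods of `b`
forming a neighbourhood base at `b`, a point `a ∈ Z` and an open neighbourhood `U₀`
of `a` such that every `V ∈ B` is the preimage of `U₀` under some continuous
`f : Y → Z` with `f b = a`. -/
def PropP {Y Z : Type u} (tY : TopologicalSpace Y) (tZ : TopologicalSpace Z) (b : Y) :
    Prop :=
  ∃ (B : Set (Set Y)) (a : Z) (U₀ : Set Z),
    (∀ V ∈ B, @IsOpen Y tY V ∧ b ∈ V) ∧
    (∀ W ∈ @nhds Y tY b, ∃ V ∈ B, V ⊆ W) ∧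
    @IsOpen Z tZ U₀ ∧ a ∈ U₀ ∧
    (∀ V ∈ B, ∃ f : Y → Z, @Continuous Y Z tY tZ f ∧ f b = a ∧ f ⁻¹' U₀ = V)

/-!
Let `f_V` (`V ∈ ℬ`) be the maps provided by `P(b,Y,Z)`, so `f_V b = a` and `f_V⁻¹ U₀ = V`.
Then `(x, y) ↦ (x, δ_x y, c ↦ f_{c x} y)`, where `δ_x y : X → Y` is `y` at `x` and `b`
elsewhere, embeds `X △_b Y` into the product `X × Y^X × Z^(ℬ^X)` of members of `𝒜`.
Off the spine `X × {b}` the coordinate `δ_x` alone recovers the topology of the fibre over `x`,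
because `{b}` is closed. If `S` is open and `(x, b) ∈ S`, pick for every `x'` with `(x', b) ∈ S`
some `c x' ∈ ℬ` inside the fibre of `S` over `x'`; then `{(x', y) | (x', b) ∈ S, f_{c x'} y ∈ U₀}`
is the preimage of an open subset of the product, contains `(x, b)` and lies in `S`.
-/

namespace IsEpireflectiveClass

variable {𝒜 : SpaceClass.{u}}

theorem of_isEmbedding (h𝒜 : IsEpireflectiveClass 𝒜) {X Y : Type u} {tX : TopologicalSpace X}
    [tY : TopologicalSpace Y] (hY : 𝒜 Y tY) {e : X → Y} (he : IsEmbedding e) : 𝒜 X tX :=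
  h𝒜.homeo _ _ _ _ ⟨he.toHomeomorph.symm⟩ (h𝒜.subspace Y tY (Set.range e) hY)

theorem mem_pi_const (h𝒜 : IsEpireflectiveClass 𝒜) (ι : Type u) {Y : Type u}
    [tY : TopologicalSpace Y] (hY : 𝒜 Y tY) : 𝒜 (ι → Y) Pi.topologicalSpace :=
  h𝒜.prod ι (fun _ => Y) (fun _ => tY) fun _ => hY

theorem mem_prod (h𝒜 : IsEpireflectiveClass 𝒜) {X Y : Type u} [tX : TopologicalSpace X]
    [tY : TopologicalSpace Y] (hX : 𝒜 X tX) (hY : 𝒜 Y tY) :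
    𝒜 (X × Y) instTopologicalSpaceProd := by
  let A : PUnit.{u + 1} ⊕ PUnit.{u + 1} → Type u := Sum.elim (fun _ => X) (fun _ => Y)
  let tA : ∀ i, TopologicalSpace (A i) := fun | .inl _ => tX | .inr _ => tY
  have hA : 𝒜 (∀ i, A i) Pi.topologicalSpace :=
    h𝒜.prod _ A tA fun | .inl _ => hX | .inr _ => hY
  exact h𝒜.homeo _ _ _ _ ⟨(Homeomorph.sumPiEquivProdPi _ _ A).trans
    ((Homeomorph.piUnique _).prodCongr (Homeomorph.piUnique _))⟩ hA

end IsEpireflectiveClass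

section TriangleTop

variable {X Y : Type u} {Z ι : Type*} {b : Y}

open Classical in
noncomputable def triangleToProd (b : Y) (F : ι → Y → Z) (p : X × Y) :
    X × (X → Y) × ((X → ι) → Z) :=
  (p.1, Function.update (fun _ => b) p.1 p.2, fun c => F (c p.1) p.2)

theorem triangleToProd_injective (F : ι → Y → Z) :
    Function.Injective (triangleToProd (X := X) b F) := by
  rintro ⟨x, y⟩ ⟨x', y'⟩ h
  simp only [triangleToProd, Prod.mk.injEq] at h
  obtain ⟨rfl, hupd, -⟩ := h
  simpa using congrFun hupd x

variable [tX : TopologicalSpace X] [tY : TopologicalSpace Y] [TopologicalSpace Z]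

theorem isOpen_triangleTop_iff {S : Set (X × Y)} :
    IsOpen[triangleTop tX tY b] S ↔
      IsOpen {x | (x, b) ∈ S} ∧ ∀ x, IsOpen {y | (x, y) ∈ S} :=
  isOpen_sup.trans <| and_congr isOpen_coinduced <|
    isOpen_iSup_iff.trans <| forall_congr' fun _ => isOpen_coinduced

theorem continuous_triangleTop_iff {W : Type*} [TopologicalSpace W] {f : X × Y → W} :
    Continuous[triangleTop tX tY b, _] f ↔
      (Continuous fun x => f (x, b)) ∧ ∀ x, Continuous fun y => f (x, y) :=
  continuous_sup_dom.trans <| and_congr continuous_coinduced_dom <|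
    continuous_iSup_dom.trans <| forall_congr' fun _ => continuous_coinduced_dom

theorem continuous_triangleToProd {F : ι → Y → Z} {a : Z} (hF : ∀ i, Continuous (F i))
    (hFb : ∀ i, F i b = a) :
    Continuous[triangleTop tX tY b, _] (triangleToProd b F) := by
  refine continuous_triangleTop_iff.2 ⟨?_, fun x => ?_⟩
  · simp only [triangleToProd, Function.update_eq_self, hFb]
    fun_prop
  · simp only [triangleToProd]
    fun_prop

theorem exists_isOpen_preimage_triangleToProd_subset_of_ne (hb : IsClosed {b})
    (F : ι → Y → Z) {S : Set (X × Y)} (hS : IsOpen[triangleTop tX tY b] S) {x : X} {y : Y}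
    (hxy : (x, y) ∈ S) (hy : y ≠ b) :
    ∃ O, IsOpen O ∧ triangleToProd b F (x, y) ∈ O ∧ triangleToProd b F ⁻¹' O ⊆ S := by
  refine ⟨{q | q.2.1 x ∈ {y' | (x, y') ∈ S} \ {b}}, ?_, ?_, ?_⟩
  · exact ((isOpen_triangleTop_iff.1 hS).2 x |>.sdiff hb).preimage (by fun_prop)
  · simp [triangleToProd, hxy, hy]
  · rintro ⟨x', y'⟩ ⟨hS', hb'⟩
    by_cases hx : x' = x
    · subst hx
      simpa [triangleToProd] using hS'
    · classical
      simp [triangleToProd, Function.update_of_ne (Ne.symm hx)] at hb'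

theorem exists_isOpen_preimage_triangleToProd_subset_of_eq {F : ι → Y → Z} {a : Z}
    {U₀ : Set Z} (hU₀ : IsOpen U₀) (ha : a ∈ U₀) (hFb : ∀ i, F i b = a)
    (hbase : ∀ W ∈ 𝓝 b, ∃ i, F i ⁻¹' U₀ ⊆ W) {S : Set (X × Y)}
    (hS : IsOpen[triangleTop tX tY b] S) {x : X} (hx : (x, b) ∈ S) :
    ∃ O, IsOpen O ∧ triangleToProd b F (x, b) ∈ O ∧ triangleToProd b F ⁻¹' O ⊆ S := by
  obtain ⟨hSb, hSx⟩ := isOpen_triangleTop_iff.1 hS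
  have hchoice : ∀ x', ∃ i, (x', b) ∈ S → F i ⁻¹' U₀ ⊆ {y | (x', y) ∈ S} := fun x' => by
    by_cases h : (x', b) ∈ S
    · obtain ⟨i, hi⟩ := hbase _ ((hSx x').mem_nhds h)
      exact ⟨i, fun _ => hi⟩
    · obtain ⟨i, -⟩ := hbase Set.univ Filter.univ_mem
      exact ⟨i, fun h' => absurd h' h⟩
  choose c hc using hchoice
  refine ⟨{q | (q.1, b) ∈ S ∧ q.2.2 c ∈ U₀}, ?_, ?_, ?_⟩
  · exact (hSb.preimage continuous_fst).inter (hU₀.preimage (by fun_prop))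
  · simp [triangleToProd, hx, hFb, ha]
  · rintro ⟨x', y'⟩ ⟨h1, h2⟩
    exact hc x' h1 h2

theorem isEmbedding_triangleToProd (hb : IsClosed {b}) {F : ι → Y → Z} {a : Z} {U₀ : Set Z}
    (hF : ∀ i, Continuous (F i)) (hU₀ : IsOpen U₀) (ha : a ∈ U₀) (hFb : ∀ i, F i b = a)
    (hbase : ∀ W ∈ 𝓝 b, ∃ i, F i ⁻¹' U₀ ⊆ W) :
    @IsEmbedding _ _ (triangleTop tX tY b) _ (triangleToProd b F) := by
  have hinduced : triangleTop tX tY b = .induced (triangleToProd b F) inferInstance := by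
    refine le_antisymm (continuous_iff_le_induced.1 (continuous_triangleToProd hF hFb))
      (TopologicalSpace.le_def.2 fun S hS => ?_)
    refine (@isOpen_iff_forall_mem_open _ (TopologicalSpace.induced _ _) _).2 ?_
    rintro ⟨x, y⟩ hxy
    obtain ⟨O, hO, hxyO, hOS⟩ : ∃ O, IsOpen O ∧ triangleToProd b F (x, y) ∈ O ∧
        triangleToProd b F ⁻¹' O ⊆ S := by
      by_cases hy : y = b
      · subst hy
        exact exists_isOpen_preimage_triangleToProd_subset_of_eq hU₀ ha hFb hbase hS hxy
      · exact exists_isOpen_preimage_triangleToProd_subset_of_ne hb F hS hxy hy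
    exact ⟨_, hOS, isOpen_induced hO, hxyO⟩
  exact @IsEmbedding.mk _ _ (triangleTop tX tY b) _ _ (@IsInducing.mk _ _ (triangleTop tX tY b) _ _
    hinduced) (triangleToProd_injective F)

end TriangleTop

theorem statement3_general (𝒜 : SpaceClass.{u}) (hA : IsEpireflectiveClass 𝒜)
    (X Y Z : Type u) (tX : TopologicalSpace X) (tY : TopologicalSpace Y)
    (tZ : TopologicalSpace Z)
    (hX : 𝒜 X tX) (hY : 𝒜 Y tY) (hZ : 𝒜 Z tZ)
    (b : Y) (hb_cl : @IsClosed Y tY {b})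
    (hP : PropP tY tZ b) :
    𝒜 (X × Y) (triangleTop tX tY b) := by
  obtain ⟨B, a, U₀, -, hbase, hU₀, ha, hB⟩ := hP
  choose F hF hFb hFU₀ using hB
  have hemb := isEmbedding_triangleToProd (X := X) hb_cl (F := fun V : B => F V V.2)
    (fun V => hF V V.2) hU₀ ha (fun V => hFb V V.2) fun W hW => by
      obtain ⟨V, hV, hVW⟩ := hbase W hW
      exact ⟨⟨V, hV⟩, (hFU₀ V hV).trans_subset hVW⟩
  exact hA.of_isEmbedding
    (hA.mem_prod hX (hA.mem_prod (hA.mem_pi_const X hY) (hA.mem_pi_const _ hZ))) hemb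

/-- If `X, Y, Z` belong to an epireflective class `𝒜`, `b ∈ Y` is a
non-isolated point with `{b}` closed, and `P(b,Y,Z)` holds, then `X △_b Y ∈ 𝒜`. -/
theorem statement3 (𝒜 : SpaceClass.{u}) (hA : IsEpireflectiveClass 𝒜)
    (X Y Z : Type u) (tX : TopologicalSpace X) (tY : TopologicalSpace Y)
    (tZ : TopologicalSpace Z)
    (hX : 𝒜 X tX) (hY : 𝒜 Y tY) (hZ : 𝒜 Z tZ)
    (b : Y) (hb_niso : ¬ @IsOpen Y tY {b}) (hb_cl : @IsClosed Y tY {b})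
    (hP : PropP tY tZ b) :
    𝒜 (X × Y) (triangleTop tX tY b) :=
  statement3_general 𝒜 hA X Y Z tX tY tZ hX hY hZ b hb_cl hP
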